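/- Top-k selection monotonicity: let f : α → ℝ be injective on a finite set T, S ⊆ T, and k ≤ k' with k ≤ |S|, k' ≤ |T|. Then the set of k elements of S with the largest f-values is contained in the set of k' elements of T with the largest f-values, provided k' ≥ k + (|T| − |S|). In particular when S = T and k ≤ k', top-k(S) ⊆ top-k'(S). -/

import Mathlib

/-- `B` is the set of `k` elements of `A` with the largest `f`-scores. -/
def IsTopK {α : Type*} [DecidableEq α] (f : α → ℝ) (A B : Finset α) (k : ℕ) : Prop :=
  B ⊆ A ∧ B.card = k ∧ ∀ b ∈ B, ∀ a ∈ A \ B, f a < f b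

/-! If `b ∈ top-k(S) \ top-k'(T)`, then all of `top-k'(T)` scores above `b`; but the elements
of `T` scoring above `b` are the other `k - 1` members of `top-k(S)` and at most `|T \ S|`
outsiders, so `k' ≤ k - 1 + (|T| - |S|)`. -/

namespace IsTopK

open Finset

variable {α : Type*} [DecidableEq α] {f : α → ℝ} {A B S : Finset α} {k : ℕ} {a b : α}

theorem mem_of_lt (hB : IsTopK f A B k) (hb : b ∈ B) (ha : a ∈ A) (hlt : f b < f a) : a ∈ B := by
  by_contra haB
  exact lt_asymm hlt (hB.2.2 b hb a (mem_sdiff.2 ⟨ha, haB⟩))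

theorem subset_filter_lt (hB : IsTopK f A B k) (hb : b ∈ A) (hbB : b ∉ B) :
    B ⊆ A.filter (f b < f ·) :=
  fun a ha => mem_filter.2 ⟨hB.1 ha, hB.2.2 a ha b (mem_sdiff.2 ⟨hb, hbB⟩)⟩

theorem card_filter_lt_lt (hB : IsTopK f S B k) (hb : b ∈ B) (T : Finset α) :
    #(T.filter (f b < f ·)) < k + #(T \ S) := by
  have hsub : T.filter (f b < f ·) ⊆ B.erase b ∪ (T \ S) := by
    intro a ha
    obtain ⟨haT, hlt⟩ := mem_filter.1 ha
    by_cases haS : a ∈ S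
    · exact mem_union_left _ (mem_erase.2 ⟨fun h => (h ▸ hlt).false, hB.mem_of_lt hb haS hlt⟩)
    · exact mem_union_right _ (mem_sdiff.2 ⟨haT, haS⟩)
  have hk : #(B.erase b) < k := hB.2.1 ▸ card_erase_lt_of_mem hb
  calc #(T.filter (f b < f ·)) ≤ #(B.erase b ∪ (T \ S)) := card_le_card hsub
    _ ≤ #(B.erase b) + #(T \ S) := card_union_le _ _
    _ < k + #(T \ S) := by omega

end IsTopK

theorem stmt_12_general {α : Type*} [DecidableEq α] (f : α → ℝ)
    (S T B B' : Finset α) (k k' : ℕ)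
    (hST : S ⊆ T)
    (hgap : k + (T.card - S.card) ≤ k')
    (hB : IsTopK f S B k) (hB' : IsTopK f T B' k') :
    B ⊆ B' := by
  intro b hb
  by_contra hbB'
  have h_above_ge := Finset.card_le_card (hB'.subset_filter_lt (hST (hB.1 hb)) hbB')
  have h_above_lt := hB.card_filter_lt_lt hb T
  rw [hB'.2.1] at h_above_ge
  rw [Finset.card_sdiff_of_subset hST] at h_above_lt
  omega

/-- Top-k selection monotonicity: for `S ⊆ T`, `k ≤ k'` with
`k ≤ |S|`, `k' ≤ |T|` and `k' ≥ k + (|T| − |S|)`, the top-`k` of `S` is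
contained in the top-`k'` of `T`. -/
theorem stmt_12 {α : Type*} [DecidableEq α] (f : α → ℝ)
    (S T B B' : Finset α) (k k' : ℕ)
    (hinj : Set.InjOn f T) (hST : S ⊆ T) (hkk : k ≤ k')
    (hkS : k ≤ S.card) (hk'T : k' ≤ T.card)
    (hgap : k + (T.card - S.card) ≤ k')
    (hB : IsTopK f S B k) (hB' : IsTopK f T B' k') :
    B ⊆ B' :=
  stmt_12_general f S T B B' k k' hST hgap hB hB'
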